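/- Let p be a prime and M a finite group with Sylow p-subgroup S nonabelian of order p^3 such that Z(S) is normal in M and C_M(O_p(M)) ≤ O_p(M). Then S is normal in M. -/

import Mathlib

/-!
Write `Z = Z(S)` and `P = O_p(M)`, so `P ≤ S`. As `S` is nonabelian of order `p ^ 3`, `Z` has
order `p` and `S / Z` has order `p ^ 2`, hence `[S, S] ≤ Z`. The subgroup
`K = C_M(Z) ∩ C_M(P Z / Z)` is normal in `M`. For `k ∈ K` and `x ∈ P` we have
`x k x⁻¹ = z k` with `z ∈ Z` commuting with `k`, so `x k^p x⁻¹ = z^p k^p = k^p`: thus `k^p`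
centralizes `P` and lies in `P`. Hence `K` is a normal `p`-subgroup and `K ≤ P`. Since
`[P, S] ≤ [S, S] ≤ Z`, also `S ≤ K`, so `S = P` is normal.
-/

/-- `P` is the largest normal `p`-subgroup `O_p(G)` of `G`. -/
def IsPCore (p : ℕ) {G : Type*} [Group G] (P : Subgroup G) : Prop :=
  P.Normal ∧ IsPGroup p ↥P ∧ ∀ Q : Subgroup G, Q.Normal → IsPGroup p ↥Q → Q ≤ P

open Subgroup
open scoped commutatorElement

namespace IsPGroup

variable {p : ℕ} {G : Type*} [Group G]

theorem of_pow_mem {H K : Subgroup G} (hH : IsPGroup p H) (hK : ∀ g ∈ K, g ^ p ∈ H) :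
    IsPGroup p K := by
  rintro ⟨g, hg⟩
  obtain ⟨n, hn⟩ := hH ⟨g ^ p, hK g hg⟩
  refine ⟨n + 1, Subtype.ext ?_⟩
  simpa [pow_succ', pow_mul] using congrArg Subtype.val hn

variable [hp : Fact p.Prime]

theorem card_center_eq_prime_of_card_eq_prime_pow_three (hG : Nat.card G = p ^ 3)
    (hnc : ¬ IsMulCommutative G) : Nat.card (center G) = p := by
  obtain ⟨k, hk0, hk⟩ := card_center_eq_prime_pow hG three_pos
  have hk3 : k ≤ 3 :=
    (Nat.pow_dvd_pow_iff_le_right hp.out.one_lt).mp (hk ▸ hG ▸ card_subgroup_dvd_card _)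
  have hindex : (center G).index = p ^ (3 - k) := by
    refine Nat.eq_of_mul_eq_mul_left (pow_pos hp.out.pos k) ?_
    rw [← pow_add, Nat.add_sub_cancel' hk3, ← hG, ← hk, card_mul_index]
  have hk1 : ¬ 1 < k := fun hk1 ↦ by
    have : Nat.card (G ⧸ center G) ∣ p := by
      simpa [← index_eq_card, hindex] using pow_dvd_pow p (show 3 - k ≤ 1 by omega)
    have := isCyclic_of_card_dvd_prime this
    exact hnc (isMulCommutative_of_isCyclic_quotient_center_self G)
  rwa [show k = 1 by omega, pow_one] at hk

theorem index_center_eq_prime_sq_of_card_eq_prime_pow_three (hG : Nat.card G = p ^ 3)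
    (hnc : ¬ IsMulCommutative G) : (center G).index = p ^ 2 := by
  have hmul := (center G).card_mul_index
  rw [card_center_eq_prime_of_card_eq_prime_pow_three hG hnc, hG, pow_succ' p 2] at hmul
  exact Nat.eq_of_mul_eq_mul_left hp.out.pos hmul

theorem commutator_le_center_of_card_eq_prime_pow_three (hG : Nat.card G = p ^ 3)
    (hnc : ¬ IsMulCommutative G) : commutator G ≤ center G :=
  Normal.quotient_commutative_iff_commutator_le.mp <| isMulCommutative_of_card_eq_prime_sq
    (index_center_eq_prime_sq_of_card_eq_prime_pow_three hG hnc)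

end IsPGroup

namespace Subgroup

variable {G : Type*} [Group G]

theorem map_subtype_center (H : Subgroup G) :
    (center H).map H.subtype = H ⊓ centralizer (H : Set G) := by
  ext g
  simp [mem_center_iff, mem_centralizer_iff, Subtype.ext_iff, and_comm]

theorem pow_card_eq_one_of_mem {H : Subgroup G} {g : G} (hg : g ∈ H) : g ^ Nat.card H = 1 :=
  congrArg Subtype.val (pow_card_eq_one' (x := (⟨g, hg⟩ : H)))

def centralizerMod (N H : Subgroup G) [N.Normal] : Subgroup G :=
  (centralizer (H.map (QuotientGroup.mk' N) : Set (G ⧸ N))).comap (QuotientGroup.mk' N)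

variable {N H : Subgroup G} [N.Normal]

theorem mem_centralizerMod {g : G} : g ∈ centralizerMod N H ↔ ∀ h ∈ H, ⁅h, g⁆ ∈ N := by
  simp [centralizerMod, mem_centralizer_iff, ← commutatorElement_eq_one_iff_mul_comm,
    ← QuotientGroup.eq_one_iff, commutatorElement_def]

instance [H.Normal] : (centralizerMod N H).Normal :=
  have := Normal.map ‹_› _ (QuotientGroup.mk'_surjective N)
  Normal.comap inferInstance _

theorem pow_mem_centralizer_of_mem_centralizerMod {n : ℕ} (hN : ∀ z ∈ N, z ^ n = 1) {g : G}
    (hgN : g ∈ centralizer (N : Set G)) (hgH : g ∈ centralizerMod N H) :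
    g ^ n ∈ centralizer (H : Set G) := by
  refine mem_centralizer_iff.mpr fun h hh ↦ ?_
  have hz := mem_centralizerMod.mp hgH h hh
  have hsemi : SemiconjBy h g (⁅h, g⁆ * g) := by
    simp [SemiconjBy, commutatorElement_def]
  have hcomm : Commute ⁅h, g⁆ g := mem_centralizer_iff.mp hgN _ hz
  simpa [SemiconjBy, hcomm.mul_pow, hN _ hz] using hsemi.pow_right n

end Subgroup

theorem sylow_normal_of_char_p_general
    {M : Type*} [Group M] {p : ℕ} [Fact p.Prime]
    (S : Sylow p M) (hcard : Nat.card ↥(S : Subgroup M) = p ^ 3)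
    (hna : ¬ ∀ a b : ↥(S : Subgroup M), a * b = b * a)
    (hZ : ((S : Subgroup M) ⊓ Subgroup.centralizer ((S : Subgroup M) : Set M)).Normal)
    (P : Subgroup M) (hP : IsPCore p P)
    (hchar : Subgroup.centralizer (P : Set M) ≤ P) :
    (S : Subgroup M).Normal := by
  obtain ⟨hPnormal, hPp, hPmax⟩ := hP
  set Z := (S : Subgroup M) ⊓ centralizer (S : Set M)
  have hnc : ¬ IsMulCommutative S := mt isMulCommutative_iff.mp hna
  have hZS : (center S).map (S : Subgroup M).subtype = Z := map_subtype_center _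
  have hZexp : ∀ z ∈ Z, z ^ p = 1 := by
    have hZcard : Nat.card Z = p := by
      rw [← hZS, card_map_of_injective (subtype_injective _)]
      exact IsPGroup.card_center_eq_prime_of_card_eq_prime_pow_three hcard hnc
    exact fun z hz ↦ hZcard ▸ pow_card_eq_one_of_mem hz
  have hSS : ⁅(S : Subgroup M), (S : Subgroup M)⁆ ≤ Z := by
    have := map_mono (f := (S : Subgroup M).subtype)
      (IsPGroup.commutator_le_center_of_card_eq_prime_pow_three hcard hnc)
    rwa [_root_.commutator_def, map_commutator, ← MonoidHom.range_eq_map, range_subtype, hZS]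
      at this
  have hPS : P ≤ S := hPp.le_sylow_of_normal S
  let K := centralizer (Z : Set M) ⊓ centralizerMod Z P
  have hKP : K ≤ P := hPmax K inferInstance <| hPp.of_pow_mem fun g hg ↦
    hchar (pow_mem_centralizer_of_mem_centralizerMod hZexp hg.1 hg.2)
  have hSK : (S : Subgroup M) ≤ K := fun s hs ↦
    ⟨le_centralizer_iff.mp inf_le_right hs,
      mem_centralizerMod.mpr fun x hx ↦ hSS (commutator_mem_commutator (hPS hx) hs)⟩
  exact le_antisymm hPS (hSK.trans hKP) ▸ hPnormal

/-- Let `M` be a finite group with a nonabelian Sylow `p`-subgroup `S` of order `p^3`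
such that `Z(S)` is normal in `M` and `C_M(O_p(M)) ≤ O_p(M)`. Then `S` is normal
in `M`. -/
theorem sylow_normal_of_char_p
    {M : Type*} [Group M] [Finite M] {p : ℕ} [Fact p.Prime]
    (S : Sylow p M) (hcard : Nat.card ↥(S : Subgroup M) = p ^ 3)
    (hna : ¬ ∀ a b : ↥(S : Subgroup M), a * b = b * a)
    (hZ : ((S : Subgroup M) ⊓ Subgroup.centralizer ((S : Subgroup M) : Set M)).Normal)
    (P : Subgroup M) (hP : IsPCore p P)
    (hchar : Subgroup.centralizer (P : Set M) ≤ P) :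
    (S : Subgroup M).Normal :=
  sylow_normal_of_char_p_general S hcard hna hZ P hP hchar
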